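/- arXiv:math/0307364 — 2 statements merged into one kernel-verified Lean document; each statement's English description precedes it below -/
import Mathlib

section
/- Let G be a finite connected multigraph and let e be an edge of G that is not a loop. If G has a cut vertex v and v is not an endpoint of e, then the image of v in G/e, the graph obtained by contracting e, is a cut vertex of G/e. -/
structure Multigraph (V : Type) (E : Type) where
  fst : E → V
  snd : E → V

namespace Multigraph

variable {V E : Type} (G : Multigraph V E)

/-- `u` and `v` are joined by an edge belonging to the edge set `F`. -/
def AdjIn (F : Set E) (u v : V) : Prop :=
  ∃ e ∈ F, (G.fst e = u ∧ G.snd e = v) ∨ (G.fst e = v ∧ G.snd e = u)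

/-- Reachability using only edges in `F`. -/
def ReachIn (F : Set E) (u v : V) : Prop :=
  Relation.ReflTransGen (G.AdjIn F) u v

def Reachable (u v : V) : Prop := G.ReachIn Set.univ u v

def Connected : Prop := Nonempty V ∧ ∀ u v : V, G.Reachable u v

/-- A separating edge (bridge): its removal disconnects its endpoints. -/
def IsBridge (e : E) : Prop := ¬ G.ReachIn {f | f ≠ e} (G.fst e) (G.snd e)

/-- Reachability in the graph obtained by deleting the vertex `v`. -/
def ReachableAvoiding (v : V) (a b : V) : Prop :=
  Relation.ReflTransGen (fun x y => x ≠ v ∧ y ≠ v ∧ G.AdjIn Set.univ x y) a b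

/-- A cut vertex: deleting it disconnects the graph. -/
def IsCutVertex (v : V) : Prop :=
  ∃ a b : V, a ≠ v ∧ b ≠ v ∧ ¬ G.ReachableAvoiding v a b

def Loopless : Prop := ∀ e : E, G.fst e ≠ G.snd e

/-- Degree of a vertex: number of incident edge-endpoints (loops count twice). -/
def degree [Fintype E] [DecidableEq V] (v : V) : ℕ :=
  (Finset.univ.filter fun e => G.fst e = v).card +
  (Finset.univ.filter fun e => G.snd e = v).card

end Multigraph

namespace Multigraph

variable {V E : Type} [DecidableEq V]

/-- The map identifying the two endpoints of the contracted edge `e`: the second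
endpoint is sent to the first. -/
def contractVertex (G : Multigraph V E) (e : E) (hne : G.fst e ≠ G.snd e)
    (u : V) : {u : V // u ≠ G.snd e} :=
  if h : u = G.snd e then ⟨G.fst e, hne⟩ else ⟨u, h⟩

/-- The multigraph `G/e` obtained by contracting the non-loop edge `e`. -/
def contractEdge (G : Multigraph V E) (e : E) (hne : G.fst e ≠ G.snd e) :
    Multigraph {u : V // u ≠ G.snd e} {f : E // f ≠ e} where
  fst := fun f => G.contractVertex e hne (G.fst f.1)
  snd := fun f => G.contractVertex e hne (G.snd f.1)

end Multigraph

namespace Multigraph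

variable {V E : Type}

lemma AdjIn.symm'' {G : Multigraph V E} {F : Set E} {u w : V} (h : G.AdjIn F u w) :
    G.AdjIn F w u := by
  obtain ⟨f, hf, h⟩ := h
  exact ⟨f, hf, h.symm⟩

lemma reachableAvoiding_symm' {G : Multigraph V E} {v a b : V}
    (h : G.ReachableAvoiding v a b) : G.ReachableAvoiding v b a := by
  induction h with
  | refl => exact .refl
  | tail _ hstep ih =>
    exact Relation.ReflTransGen.head ⟨hstep.2.1, hstep.1, hstep.2.2.symm''⟩ ih

variable [DecidableEq V]

lemma contractVertex_ne_v (G : Multigraph V E) (e : E) (hne : G.fst e ≠ G.snd e)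
    {v : V} (hv1 : v ≠ G.fst e) {u : V} (hu : u ≠ v) :
    ((G.contractVertex e hne u) : V) ≠ v := by
  unfold contractVertex
  split_ifs with h
  · exact Ne.symm hv1
  · exact hu

lemma rep_reach (G : Multigraph V E) (e : E) (hne : G.fst e ≠ G.snd e)
    {v : V} (hv1 : v ≠ G.fst e) (hv2 : v ≠ G.snd e) {u : V} (hu : u ≠ v) :
    G.ReachableAvoiding v ((G.contractVertex e hne u) : V) u := by
  unfold contractVertex
  split_ifs with h
  · subst h
    exact Relation.ReflTransGen.single
      ⟨Ne.symm hv1, hu, ⟨e, Set.mem_univ e, Or.inl ⟨rfl, rfl⟩⟩⟩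
  · exact Relation.ReflTransGen.refl

lemma lift_step (G : Multigraph V E) (e : E) (hne : G.fst e ≠ G.snd e)
    {v : V} (hv1 : v ≠ G.fst e) (hv2 : v ≠ G.snd e)
    {x y : {u : V // u ≠ G.snd e}}
    (hx : (x : V) ≠ v) (hy : (y : V) ≠ v)
    (h : (G.contractEdge e hne).AdjIn Set.univ x y) :
    G.ReachableAvoiding v (x : V) (y : V) := by
  obtain ⟨f, -, hf⟩ := h
  have key : ∀ (a b : {u : V // u ≠ G.snd e}), (a : V) ≠ v → (b : V) ≠ v →
      G.contractVertex e hne (G.fst f.1) = a → G.contractVertex e hne (G.snd f.1) = b →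
      G.ReachableAvoiding v (a : V) (b : V) := by
    intro a b hav hbv ha hb
    have hfa : G.fst f.1 ≠ v := by
      intro hc
      apply hav
      rw [← ha, hc]
      unfold contractVertex
      rw [dif_neg hv2]
    have hfb : G.snd f.1 ≠ v := by
      intro hc
      apply hbv
      rw [← hb, hc]
      unfold contractVertex
      rw [dif_neg hv2]
    have h1 : G.ReachableAvoiding v (a : V) (G.fst f.1) := by
      rw [← ha]; exact G.rep_reach e hne hv1 hv2 hfa
    have h2 : G.ReachableAvoiding v (G.snd f.1) (b : V) := by
      rw [← hb]
      exact reachableAvoiding_symm' (G.rep_reach e hne hv1 hv2 hfb)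
    refine h1.trans (Relation.ReflTransGen.head ?_ h2)
    exact ⟨hfa, hfb, ⟨f.1, Set.mem_univ _, Or.inl ⟨rfl, rfl⟩⟩⟩
  rcases hf with ⟨h1, h2⟩ | ⟨h1, h2⟩
  · exact key x y hx hy h1 h2
  · exact reachableAvoiding_symm' (key y x hy hx h1 h2)

lemma lift_reach (G : Multigraph V E) (e : E) (hne : G.fst e ≠ G.snd e)
    {v : V} (hv1 : v ≠ G.fst e) (hv2 : v ≠ G.snd e)
    {x y : {u : V // u ≠ G.snd e}}
    (h : (G.contractEdge e hne).ReachableAvoiding ⟨v, hv2⟩ x y) :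
    G.ReachableAvoiding v (x : V) (y : V) := by
  induction h with
  | refl => exact .refl
  | tail _ hstep ih =>
    refine ih.trans ?_
    obtain ⟨hb, hc, hadj⟩ := hstep
    have hb' : (_ : V) ≠ v := fun h => hb (Subtype.ext h)
    have hc' : (_ : V) ≠ v := fun h => hc (Subtype.ext h)
    exact G.lift_step e hne hv1 hv2 hb' hc' hadj

end Multigraph

/-- If `v` is a cut vertex of a finite connected multigraph `G`, `e` is a
non-loop edge and `v` is not an endpoint of `e`, then the image of `v` in
the contracted graph `G/e` is a cut vertex of `G/e`. -/
theorem cut_vertex_of_contract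
    {V E : Type} [Fintype V] [Fintype E] [DecidableEq V]
    (G : Multigraph V E) (hconn : G.Connected)
    (e : E) (hne : G.fst e ≠ G.snd e)
    (v : V) (hv : G.IsCutVertex v)
    (hv1 : v ≠ G.fst e) (hv2 : v ≠ G.snd e) :
    (G.contractEdge e hne).IsCutVertex ⟨v, hv2⟩ := by
  obtain ⟨a, b, ha, hb, hab⟩ := hv
  refine ⟨G.contractVertex e hne a, G.contractVertex e hne b, ?_, ?_, ?_⟩
  · exact fun h => G.contractVertex_ne_v e hne hv1 ha (congrArg Subtype.val h)
  · exact fun h => G.contractVertex_ne_v e hne hv1 hb (congrArg Subtype.val h)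
  · intro h
    apply hab
    have hmid := G.lift_reach e hne hv1 hv2 h
    have h1 := G.rep_reach e hne hv1 hv2 ha
    have h2 := G.rep_reach e hne hv1 hv2 hb
    exact (Multigraph.reachableAvoiding_symm' h1).trans (hmid.trans h2)
end

section
/- Let S be a finite set with l ≥ 2 elements. Then any pairwise compatible family of splits of S in which every split separates the set nontrivially has at most 2l - 3 elements. -/
variable (S : Type) [Fintype S] [DecidableEq S]

/-- A split representative: a subset of `S` with both parts nonempty. -/
def SplitRep : Type := {X : Finset S // X.Nonempty ∧ Xᶜ.Nonempty}

/-- Two representatives give the same split if they are equal or complementary. -/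
def splitSetoid : Setoid (SplitRep S) where
  r X Y := X.1 = Y.1 ∨ X.1 = Y.1ᶜ
  iseqv := by
    constructor
    · exact fun X => Or.inl rfl
    · rintro X Y (h | h)
      · exact Or.inl h.symm
      · exact Or.inr (by rw [h, compl_compl])
    · rintro X Y Z (h1 | h1) (h2 | h2)
      · exact Or.inl (h1.trans h2)
      · exact Or.inr (h1.trans h2)
      · exact Or.inr (h2 ▸ h1)
      · exact Or.inl (by rw [h1, h2, compl_compl])

/-- A split of `S`: an unordered partition of `S` into two nonempty parts. -/
def Split : Type := Quotient (splitSetoid S)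

/-- Two splits are compatible if they have representatives `X₁`, `X₂` with
`X₁ ⊆ X₂`, `X₁ ⊆ X₂ᶜ`, `X₁ᶜ ⊆ X₂` or `X₁ᶜ ⊆ X₂ᶜ`. -/
def Split.Compatible (a b : Split S) : Prop :=
  ∃ X Y : SplitRep S, a = Quotient.mk _ X ∧ b = Quotient.mk _ Y ∧
    (X.1 ⊆ Y.1 ∨ X.1 ⊆ Y.1ᶜ ∨ X.1ᶜ ⊆ Y.1 ∨ X.1ᶜ ⊆ Y.1ᶜ)

instance : DecidableEq (Split S) :=
  @Quotient.decidableEq _ (splitSetoid S) fun X Y =>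
    inferInstanceAs (Decidable (X.1 = Y.1 ∨ X.1 = Y.1ᶜ))

noncomputable instance : Fintype (Split S) :=
  @Quotient.fintype (SplitRep S)
    (Subtype.fintype _) (splitSetoid S) fun X Y =>
    inferInstanceAs (Decidable (X.1 = Y.1 ∨ X.1 = Y.1ᶜ))



open Finset in
lemma laminarA {α : Type} [DecidableEq α] :
    ∀ (n : ℕ) (T : Finset α), T.card ≤ n →
    ∀ (F : Finset (Finset α)),
      (∀ A ∈ F, A ⊆ T) → (∀ A ∈ F, A.Nonempty) →
      (∀ A ∈ F, ∀ B ∈ F, A ⊆ B ∨ B ⊆ A ∨ Disjoint A B) →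
      T ∉ F → F.card ≤ 2 * T.card - 2 := by
  intro n
  induction n with
  | zero =>
    intro T hT F hsub hne _ _
    have hT0 : T = ∅ := Finset.card_eq_zero.mp (Nat.le_zero.mp hT)
    have hF : F = ∅ := by
      rw [Finset.eq_empty_iff_forall_notMem]
      intro A hA
      exact (hne A hA).ne_empty (Finset.subset_empty.mp (hT0 ▸ hsub A hA))
    simp [hF]
  | succ n ih =>
    intro T hT F hsub hne hlam hTF
    have partB : ∀ (U : Finset α), U.card ≤ n → ∀ (G : Finset (Finset α)),
        (∀ A ∈ G, A ⊆ U) → (∀ A ∈ G, A.Nonempty) →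
        (∀ A ∈ G, ∀ B ∈ G, A ⊆ B ∨ B ⊆ A ∨ Disjoint A B) →
        G.card ≤ 2 * U.card - 1 := by
      intro U hU G h1 h2 h3
      by_cases hUG : U ∈ G
      · have hcard : 1 ≤ U.card := Finset.card_pos.mpr (h2 U hUG)
        have herase := ih U hU (G.erase U)
          (fun A hA => h1 A (Finset.mem_of_mem_erase hA))
          (fun A hA => h2 A (Finset.mem_of_mem_erase hA))
          (fun A hA B hB => h3 A (Finset.mem_of_mem_erase hA) B (Finset.mem_of_mem_erase hB))
          (Finset.notMem_erase U G)
        have := Finset.card_erase_add_one hUG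
        omega
      · have := ih U hU G h1 h2 h3 hUG
        omega
    by_cases hF : F.Nonempty
    case neg =>
      rw [Finset.not_nonempty_iff_eq_empty] at hF; simp [hF]
    obtain ⟨A, hA, hmax⟩ := Finset.exists_max_image F Finset.card hF
    have hAT : A ⊆ T := hsub A hA
    have hAneT : A ≠ T := fun h => hTF (h ▸ hA)
    have hAcard : A.card < T.card := Finset.card_lt_card (hAT.ssubset_of_ne hAneT)
    have h1 : 1 ≤ A.card := Finset.card_pos.mpr (hne A hA)
    have hb1 : (F.filter (fun B => B ⊆ A)).card ≤ 2 * A.card - 1 := by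
      apply partB A (by omega)
      · intro B hB; exact (Finset.mem_filter.mp hB).2
      · intro B hB; exact hne B (Finset.mem_filter.mp hB).1
      · intro B hB C hC
        exact hlam B (Finset.mem_filter.mp hB).1 C (Finset.mem_filter.mp hC).1
    have hsd : (T \ A).card = T.card - A.card := Finset.card_sdiff_of_subset hAT
    have hb2 : (F.filter (fun B => ¬ B ⊆ A)).card ≤ 2 * (T \ A).card - 1 := by
      apply partB (T \ A) (by omega)
      · intro B hB
        rw [Finset.mem_filter] at hB
        rw [Finset.subset_sdiff]
        refine ⟨hsub B hB.1, ?_⟩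
        rcases hlam B hB.1 A hA with h | h | h
        · exact absurd h hB.2
        · have : A = B := Finset.eq_of_subset_of_card_le h (hmax B hB.1)
          exact absurd (this ▸ Finset.Subset.refl A) hB.2
        · exact h
      · intro B hB; exact hne B (Finset.mem_filter.mp hB).1
      · intro B hB C hC
        exact hlam B (Finset.mem_filter.mp hB).1 C (Finset.mem_filter.mp hC).1
    have hsum := Finset.card_filter_add_card_filter_not (s := F)
      (p := fun B => B ⊆ A)
    omega

/-- top-level part B -/
lemma laminarB {α : Type} [DecidableEq α] (T : Finset α) (F : Finset (Finset α))
    (h1 : ∀ A ∈ F, A ⊆ T) (h2 : ∀ A ∈ F, A.Nonempty)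
    (h3 : ∀ A ∈ F, ∀ B ∈ F, A ⊆ B ∨ B ⊆ A ∨ Disjoint A B) :
    F.card ≤ 2 * T.card - 1 := by
  by_cases hTF : T ∈ F
  · have hc : 1 ≤ T.card := Finset.card_pos.mpr (h2 T hTF)
    have he := laminarA T.card T le_rfl (F.erase T)
      (fun A hA => h1 A (Finset.mem_of_mem_erase hA))
      (fun A hA => h2 A (Finset.mem_of_mem_erase hA))
      (fun A hA B hB => h3 A (Finset.mem_of_mem_erase hA) B (Finset.mem_of_mem_erase hB))
      (Finset.notMem_erase T F)
    have := Finset.card_erase_add_one hTF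
    omega
  · have := laminarA T.card T le_rfl F h1 h2 h3 hTF
    omega


/-- Any family of pairwise distinct, pairwise compatible splits of a finite set
`S` with `l ≥ 2` elements has at most `2l - 3` members. -/
theorem compatible_splits_card_le
    (hS : 2 ≤ Fintype.card S) (P : Finset (Split S))
    (hP : ∀ a ∈ P, ∀ b ∈ P, Split.Compatible S a b) :
    P.card ≤ 2 * Fintype.card S - 3 := by
  obtain ⟨x⟩ : Nonempty S := Fintype.card_pos_iff.mp (by omega)
  classical
  set f : SplitRep S → Finset S := fun X => if x ∈ X.1 then X.1ᶜ else X.1 with hf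
  have hwd : ∀ X Y : SplitRep S, (splitSetoid S).r X Y → f X = f Y := by
    intro X Y h
    rcases h with h | h
    · simp only [hf, h]
    · by_cases hx : x ∈ X.1
      · have hy : x ∉ Y.1 := by rw [h, Finset.mem_compl] at hx; exact hx
        simp only [hf, if_pos hx, if_neg hy, h, compl_compl]
      · have hy : x ∈ Y.1 := by rw [h, Finset.mem_compl, not_not] at hx; exact hx
        simp only [hf, if_neg hx, if_pos hy, h]
  set φ : Split S → Finset S := Quotient.lift f hwd with hφ
  -- key facts about f
  have hfx : ∀ X : SplitRep S, x ∉ f X := by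
    intro X
    by_cases hx : x ∈ X.1
    · simp only [hf, if_pos hx, Finset.mem_compl, not_not]
      exact hx
    · simp [hf, if_neg hx, hx]
  have hfne : ∀ X : SplitRep S, (f X).Nonempty := by
    intro X
    by_cases hx : x ∈ X.1
    · simpa [hf, if_pos hx] using X.2.2
    · simpa [hf, if_neg hx] using X.2.1
  have hfrep : ∀ X : SplitRep S, f X = X.1 ∨ f X = X.1ᶜ := by
    intro X
    by_cases hx : x ∈ X.1
    · exact Or.inr (by simp [hf, if_pos hx])
    · exact Or.inl (by simp [hf, if_neg hx])
  -- injectivity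
  have hinj : Function.Injective φ := by
    intro q r
    induction q using Quotient.ind
    induction r using Quotient.ind
    rename_i X Y
    intro h
    have h' : f X = f Y := h
    apply Quotient.sound
    rcases hfrep X with h1 | h1 <;> rcases hfrep Y with h2 | h2 <;>
      rw [h1, h2] at h'
    · exact Or.inl h'
    · exact Or.inr h'
    · exact Or.inr (by rw [← h', compl_compl])
    · exact Or.inl (by have := congrArg compl h'; simpa using this)
  -- the four-way compatibility transfers
  have hFW : ∀ A B : Finset S,
      (A ⊆ B ∨ A ⊆ Bᶜ ∨ Aᶜ ⊆ B ∨ Aᶜ ⊆ Bᶜ) → x ∉ A → x ∉ B →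
      A ⊆ B ∨ B ⊆ A ∨ Disjoint A B := by
    intro A B h hA hB
    rcases h with h | h | h | h
    · exact Or.inl h
    · exact Or.inr (Or.inr (Finset.disjoint_left.mpr
        (fun a ha hb => (Finset.mem_compl.mp (h ha)) hb)))
    · exact absurd (h (Finset.mem_compl.mpr hA)) hB
    · exact Or.inr (Or.inl (by
        intro a ha
        by_contra hna
        exact (Finset.mem_compl.mp (h (Finset.mem_compl.mpr hna))) ha))
  -- FW is invariant under complementing either argument
  have hFWc : ∀ A B : Finset S,
      (A ⊆ B ∨ A ⊆ Bᶜ ∨ Aᶜ ⊆ B ∨ Aᶜ ⊆ Bᶜ) →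
      ∀ A' B' : Finset S, (A' = A ∨ A' = Aᶜ) → (B' = B ∨ B' = Bᶜ) →
      (A' ⊆ B' ∨ A' ⊆ B'ᶜ ∨ A'ᶜ ⊆ B' ∨ A'ᶜ ⊆ B'ᶜ) := by
    intro A B h A' B' hA hB
    rcases hA with rfl | rfl <;> rcases hB with rfl | rfl <;>
      · try simp only [compl_compl]
        tauto
  -- apply laminar bound to image
  have hcard : P.card = (P.image φ).card :=
    (Finset.card_image_of_injective P hinj).symm
  set T : Finset S := ({x} : Finset S)ᶜ with hT
  have hTcard : T.card = Fintype.card S - 1 := by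
    rw [hT, Finset.card_compl, Finset.card_singleton]
  have hmain := laminarB T (P.image φ)
    (by
      intro A hA
      obtain ⟨q, hq, rfl⟩ := Finset.mem_image.mp hA
      obtain ⟨X, Y, hX, hY, _⟩ := hP q hq q hq
      rw [hX]
      intro a ha
      rw [hT, Finset.mem_compl, Finset.mem_singleton]
      rintro rfl
      exact hfx X ha)
    (by
      intro A hA
      obtain ⟨q, hq, rfl⟩ := Finset.mem_image.mp hA
      obtain ⟨X, Y, hX, hY, _⟩ := hP q hq q hq
      rw [hX]
      exact hfne X)
    (by
      intro A hA B hB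
      obtain ⟨q, hq, rfl⟩ := Finset.mem_image.mp hA
      obtain ⟨r, hr, rfl⟩ := Finset.mem_image.mp hB
      obtain ⟨X, Y, hX, hY, hor⟩ := hP q hq r hr
      rw [hX, hY]
      have h1 := hfrep X
      have h2 := hfrep Y
      have := hFWc X.1 Y.1 hor (f X) (f Y) h1 h2
      exact hFW (f X) (f Y) this (hfx X) (hfx Y))
  have : 1 ≤ Fintype.card S := by omega
  omega
end
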